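/- If f ∈ C^ω_δ(𝕋,ℂ) is not identically zero, then log|f| is integrable on 𝕋, i.e. |∫₀¹ log|f(x)| dx| < ∞. -/

import Mathlib

open MeasureTheory Set

lemma intervalIntegrable_log_zero (c : ℝ) :
    IntervalIntegrable Real.log volume 0 c := by
  have base : ∀ c : ℝ, 0 ≤ c → IntervalIntegrable Real.log volume 0 c := by
    intro c hc
    rw [intervalIntegrable_iff, uIoc_of_le hc]
    set M : ℝ := max c 1 with hM
    have hM1 : (1:ℝ) ≤ M := le_max_right _ _
    have hcM : c ≤ M := le_max_left _ _
    apply IntegrableOn.mono_set (t := Ioc 0 M) _ (Ioc_subset_Ioc_right hcM)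
    have hrpow : IntegrableOn (fun x : ℝ => x ^ (-(1/2 : ℝ))) (Ioc 0 M) volume := by
      have := intervalIntegral.intervalIntegrable_rpow' (a := 0) (b := M)
        (r := -(1/2 : ℝ)) (by norm_num)
      rwa [intervalIntegrable_iff, uIoc_of_le (by linarith)] at this
    have hg : IntegrableOn (fun x : ℝ => 2 * x ^ (-(1/2 : ℝ)) + Real.log M)
        (Ioc 0 M) volume := by
      exact (hrpow.const_mul 2).add (integrableOn_const measure_Ioc_lt_top.ne)
    refine Integrable.mono' hg Real.measurable_log.aestronglyMeasurable ?_
    filter_upwards [ae_restrict_mem measurableSet_Ioc] with t ht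
    have ht0 : 0 < t := ht.1
    have hrp : (0:ℝ) < t ^ (-(1/2 : ℝ)) := Real.rpow_pos_of_pos ht0 _
    have hlogM : 0 ≤ Real.log M := Real.log_nonneg hM1
    rcases le_total t 1 with h1 | h1
    · have hlt : Real.log t ≤ 0 := Real.log_nonpos ht0.le h1
      rw [Real.norm_eq_abs, abs_of_nonpos hlt]
      have h2 : Real.log (t ^ (-(1/2 : ℝ))) = -(1/2) * Real.log t :=
        Real.log_rpow ht0 _
      have h3 : Real.log (t ^ (-(1/2 : ℝ))) ≤ t ^ (-(1/2 : ℝ)) - 1 :=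
        Real.log_le_sub_one_of_pos hrp
      nlinarith
    · have hlt : 0 ≤ Real.log t := Real.log_nonneg h1
      rw [Real.norm_eq_abs, abs_of_nonneg hlt]
      have : Real.log t ≤ Real.log M := Real.log_le_log ht0 ht.2
      nlinarith
  rcases le_total 0 c with hc | hc
  · exact base c hc
  · rw [IntervalIntegrable.iff_comp_neg]
    have : (fun x : ℝ => Real.log (-x)) = Real.log := by
      funext x; exact Real.log_neg_eq_log x
    rw [this, neg_zero]
    exact base (-c) (by linarith)

lemma intervalIntegrable_log_any (a b : ℝ) :
    IntervalIntegrable Real.log volume a b :=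
  (intervalIntegrable_log_zero a).symm.trans (intervalIntegrable_log_zero b)

lemma intervalIntegrable_log_abs_sub (c a b : ℝ) :
    IntervalIntegrable (fun t => Real.log |t - c|) volume a b := by
  have := (intervalIntegrable_log_any (a - c) (b - c)).comp_sub_right c
  simp only [sub_add_cancel] at this
  have he : (fun t : ℝ => Real.log |t - c|) = fun t : ℝ => Real.log (t - c) := by
    funext t; exact Real.log_abs _
  rw [he]; exact this

/-- If `f` is 1-periodic, holomorphic on a neighborhood of the strip `{|Im z| ≤ δ}`
and not identically zero, then `log |f|` is integrable on the circle `[0,1]`. -/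
theorem log_abs_integrable (δ : ℝ) (hδ : 0 < δ) (U : Set ℂ) (hU : IsOpen U)
    (hsub : {z : ℂ | |z.im| ≤ δ} ⊆ U) (f : ℂ → ℂ) (hf : DifferentiableOn ℂ f U)
    (hper : ∀ z, f (z + 1) = f z) (hf0 : ∃ z : ℂ, |z.im| ≤ δ ∧ f z ≠ 0) :
    IntegrableOn (fun x : ℝ => Real.log (‖f x‖)) (Set.Ioc 0 1) volume := by
  obtain ⟨z₀, hz₀, hfz₀⟩ := hf0
  set T : Set ℂ := {z | |z.im| ≤ δ} with hT
  have hAn : ∀ z ∈ T, AnalyticAt ℂ f z := fun z hz =>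
    hf.analyticAt (hU.mem_nhds (hsub hz))
  have hT_conn : IsPreconnected T := by
    have : T = {z : ℂ | -δ ≤ z.im} ∩ {z : ℂ | z.im ≤ δ} := by
      ext z; simp only [hT, mem_setOf_eq, mem_inter_iff, abs_le]
    rw [this]
    exact ((convex_halfSpace_im_ge (-δ)).inter (convex_halfSpace_im_le δ)).isPreconnected
  have key : ∀ x : ℝ, ∃ ε > 0, IntegrableOn
      (fun t : ℝ => Real.log (‖f t‖)) (Ioo (x - ε) (x + ε)) volume := by
    intro x
    have hxT : (x : ℂ) ∈ T := by simp [hT, hδ.le]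
    have hA := hAn _ hxT
    have hord : analyticOrderAt f x ≠ ⊤ := by
      intro h
      rw [analyticOrderAt_eq_top] at h
      exact hfz₀ (AnalyticOnNhd.eqOn_zero_of_preconnected_of_eventuallyEq_zero
        hAn hT_conn hxT h hz₀)
    obtain ⟨n, hn⟩ := WithTop.ne_top_iff_exists.mp hord
    obtain ⟨g, hg_an, hg_ne, hfg⟩ := (hA.analyticOrderAt_eq_natCast (n := n)).mp hn.symm
    have h1 : ∀ᶠ z in nhds (x : ℂ), AnalyticAt ℂ g z := hg_an.eventually_analyticAt
    have h2 : ∀ᶠ z in nhds (x : ℂ), g z ≠ 0 :=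
      hg_an.continuousAt.eventually_ne hg_ne
    obtain ⟨ε, hε, hball⟩ := Metric.eventually_nhds_iff_ball.mp (hfg.and (h1.and h2))
    refine ⟨ε / 2, by positivity, ?_⟩
    have hmem : ∀ t : ℝ, t ∈ Icc (x - ε/2) (x + ε/2) → (t : ℂ) ∈ Metric.ball (x : ℂ) ε := by
      intro t ht
      rw [Metric.mem_ball, Complex.dist_eq, ← Complex.ofReal_sub, Complex.norm_real,
        Real.norm_eq_abs, abs_sub_lt_iff]
      constructor <;> [linarith [ht.2]; linarith [ht.1]]
    have hga : IntegrableOn (fun t : ℝ => Real.log (‖g t‖))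
        (Icc (x - ε/2) (x + ε/2)) volume := by
      apply ContinuousOn.integrableOn_Icc
      apply ContinuousOn.log
      · apply continuous_norm.comp_continuousOn
        intro t ht
        exact ((hball _ (hmem t ht)).2.1.continuousAt.comp
          Complex.continuous_ofReal.continuousAt).continuousWithinAt
      · intro t ht
        simpa using (hball _ (hmem t ht)).2.2
    have hint : IntegrableOn (fun t : ℝ =>
        (n : ℝ) * Real.log |t - x| + Real.log (‖g t‖))
        (Ioo (x - ε/2) (x + ε/2)) volume := by
      apply Integrable.add
      · have := ((intervalIntegrable_log_abs_sub x (x - ε/2) (x + ε/2)).const_mul (n : ℝ))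
        rw [intervalIntegrable_iff, uIoc_of_le (by linarith)] at this
        exact this.mono_set Ioo_subset_Ioc_self
      · exact hga.mono_set Ioo_subset_Icc_self
    apply hint.congr
    have hne : ∀ᵐ t : ℝ ∂(volume : Measure ℝ), t ≠ x := by
      simp [ae_iff]
    filter_upwards [ae_restrict_mem measurableSet_Ioo, ae_restrict_of_ae hne] with t ht htne
    have htb : (t : ℂ) ∈ Metric.ball (x : ℂ) ε := hmem t (Ioo_subset_Icc_self ht)
    have hfe : f t = ((t : ℂ) - x) ^ n • g t := (hball _ htb).1
    have hgne : g (t : ℂ) ≠ 0 := (hball _ htb).2.2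
    have htx : ((t : ℂ) - x) = ((t - x : ℝ) : ℂ) := by push_cast; ring
    rw [hfe, smul_eq_mul, norm_mul, norm_pow, htx, Complex.norm_real, Real.norm_eq_abs,
      Real.log_mul (pow_ne_zero _ (abs_ne_zero.mpr (sub_ne_zero.mpr htne)))
        (by simpa using hgne),
      Real.log_pow]
  choose ε hεpos hεint using key
  obtain ⟨s, hs_sub, hs_fin, hs_cover⟩ := isCompact_Icc.elim_finite_subcover_image
    (b := Icc (0:ℝ) 1) (c := fun x => Ioo (x - ε x) (x + ε x))
    (fun x _ => isOpen_Ioo)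
    (fun y hy => mem_biUnion hy ⟨by linarith [hεpos y], by linarith [hεpos y]⟩)
  have hbig : IntegrableOn (fun t : ℝ => Real.log (‖f t‖))
      (⋃ x ∈ s, Ioo (x - ε x) (x + ε x)) volume :=
    (integrableOn_finite_biUnion hs_fin).mpr fun i _ => hεint i
  exact hbig.mono_set (Ioc_subset_Icc_self.trans hs_cover)
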